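/- Let G be a generalized Young function satisfying (H1) and (H3). For each x ∈ ℝⁿ define h₀(x,ρ) := ρ^{−1} ∫_{S^{n−1}} G(x,x,|w_n|ρ) dH^{n−1}(w) for ρ > 0 and h₀(x,0) := 0. Then for every x ∈ ℝⁿ: ρ ↦ h₀(x,ρ) is nondecreasing on [0,∞); h₀(x,ρ) → ∞ as ρ → ∞; and H₀(x,t) = ∫₀ᵗ h₀(x,ρ) dρ for every t ≥ 0. In particular, for every x, the function t ↦ H₀(x,t) is convex on [0,∞) with H₀(x,0) = 0. -/

import Mathlib

open MeasureTheory Real Filter Topology Metric Set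

noncomputable section

/-- Euclidean space `ℝⁿ` with `n = m + 1 ≥ 1`. -/
abbrev Euc (m : ℕ) := EuclideanSpace ℝ (Fin (m + 1))

/-- The last coordinate of a point of `ℝ^{m+1}`. -/
def lastCoord {m : ℕ} (w : Euc m) : ℝ := w (Fin.last m)

/-- The volume of the unit ball of `ℝ^{m+1}`. -/
def unitBallVol (m : ℕ) : ℝ := (volume (ball (0 : Euc m) 1)).toReal

/-- The data of a generalized Young function `G(x,y,t) = ∫₀ᵗ g(x,y,s) ds`, where the
density `g` vanishes at `t = 0`, is positive for `t > 0`, is nondecreasing and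
right-continuous in `t` on `[0,∞)`, and tends to `∞` as `t → ∞`. -/
structure GenYoung (m : ℕ) where
  g : Euc m → Euc m → ℝ → ℝ
  g_nonneg : ∀ x y t, 0 ≤ t → 0 ≤ g x y t
  g_zero : ∀ x y, g x y 0 = 0
  g_pos : ∀ x y t, 0 < t → 0 < g x y t
  g_mono : ∀ x y, MonotoneOn (g x y) (Set.Ici 0)
  g_rightCont : ∀ x y t, 0 ≤ t → ContinuousWithinAt (g x y) (Set.Ici t) t
  g_top : ∀ x y, Tendsto (g x y) atTop atTop

namespace GenYoung

variable {m : ℕ}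

/-- The generalized Young function `G(x,y,t) = ∫₀ᵗ g(x,y,s) ds`. -/
def G (D : GenYoung m) (x y : Euc m) (t : ℝ) : ℝ := ∫ s in (0:ℝ)..t, D.g x y s

/-- Hypothesis (H1): `0 < C₁ ≤ G(x,y,1) ≤ C₂` uniformly in `x, y`. -/
def H1 (D : GenYoung m) (C1 C2 : ℝ) : Prop :=
  0 < C1 ∧ C1 ≤ C2 ∧ ∀ x y : Euc m, C1 ≤ D.G x y 1 ∧ D.G x y 1 ≤ C2

/-- Hypothesis (H2): `y ↦ G(x,y,t)` is continuous. -/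
def H2 (D : GenYoung m) : Prop :=
  ∀ (x : Euc m) (t : ℝ), 0 ≤ t → Continuous fun y => D.G x y t

/-- Hypothesis (H3): `p⁻ ≤ t g(x,y,t) / G(x,y,t) ≤ p⁺` with `1 < p⁻ ≤ p⁺ < ∞`. -/
def H3 (D : GenYoung m) (pm pp : ℝ) : Prop :=
  1 < pm ∧ pm ≤ pp ∧ ∀ (x y : Euc m) (t : ℝ), 0 < t →
    pm ≤ t * D.g x y t / D.G x y t ∧ t * D.g x y t / D.G x y t ≤ pp

/-- The limit function
`H₀(x,t) = ∫₀¹ ∫_{S^{n-1}} G(x,x,t |wₙ| r) dH^{n-1}(w) r⁻¹ dr`, where the sphere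
carries the `(n-1)`-dimensional Hausdorff measure. -/
def H0 (D : GenYoung m) (x : Euc m) (t : ℝ) : ℝ :=
  ∫ r in (0:ℝ)..1,
    (∫ w in sphere (0 : Euc m) 1, D.G x x (t * |lastCoord w| * r) ∂μH[(m:ℝ)]) / r

/-- The modular `𝒥_{s,G}(u) = ∬ G(x,y,|u(x)-u(y)|/|x-y|ˢ) |x-y|⁻ⁿ dx dy`. -/
def J (D : GenYoung m) (s : ℝ) (u : Euc m → ℝ) : ℝ :=
  ∫ q : Euc m × Euc m,
    D.G q.1 q.2 (|u q.1 - u q.2| / ‖q.1 - q.2‖ ^ s) / ‖q.1 - q.2‖ ^ (m + 1)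

end GenYoung

/-- The density `h₀(x,ρ) = ρ⁻¹ ∫_{S^{n-1}} G(x,x,|wₙ|ρ) dH^{n-1}(w)` for `ρ > 0`,
with `h₀(x,0) = 0`. -/
def sphDensity {m : ℕ} (D : GenYoung m) (x : Euc m) (ρ : ℝ) : ℝ :=
  if ρ = 0 then 0
  else (∫ w in sphere (0 : Euc m) 1, D.G x x (|lastCoord w| * ρ) ∂μH[(m:ℝ)]) / ρ

/-!
Each `G(x,x,·)` is the primitive of a nondecreasing function, hence convex with `G(x,x,0) = 0`,
so `G(x,x,θs) ≤ θ G(x,x,s)` for `θ ∈ [0,1]`; integrated over the sphere this makes `h₀(x,·)`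
nondecreasing. As `G(x,x,t) ≥ (t/2) g(x,x,t/2)`, `G(x,x,t)/t → ∞`, and since the cap
`{|wₙ| ≥ 1/2}` has positive and finite `Hⁿ⁻¹`-measure (it projects onto an `(n-1)`-ball, and the
sphere is covered by radial projections of the faces of a cube), `h₀(x,ρ) → ∞`. The substitution
`ρ = t r` turns `H₀(x,t)` into `∫₀ᵗ h₀(x,ρ) dρ`, the primitive of a nondecreasing function,
which is therefore convex.
-/

open intervalIntegral EuclideanSpace
open scoped ENNReal

section MonotonePrimitive

variable {f : ℝ → ℝ} {a : ℝ}

theorem MonotoneOn.intervalIntegrable_of_mem_Ici (hf : MonotoneOn f (Ici a)) {b c : ℝ}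
    (hb : a ≤ b) (hc : a ≤ c) : IntervalIntegrable f volume b c :=
  (hf.mono fun _ hu => (le_min hb hc).trans hu.1).intervalIntegrable

theorem MonotoneOn.intervalIntegral_le_mul (hf : MonotoneOn f (Ici a)) {b c : ℝ}
    (hb : a ≤ b) (hbc : b ≤ c) : ∫ s in b..c, f s ≤ (c - b) * f c := by
  simpa using integral_mono_on hbc (hf.intervalIntegrable_of_mem_Ici hb (hb.trans hbc))
    intervalIntegrable_const fun u hu => hf (hb.trans hu.1) (hb.trans hbc) hu.2

theorem MonotoneOn.mul_le_intervalIntegral (hf : MonotoneOn f (Ici a)) {b c : ℝ}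
    (hb : a ≤ b) (hbc : b ≤ c) : (c - b) * f b ≤ ∫ s in b..c, f s := by
  simpa using integral_mono_on hbc intervalIntegrable_const
    (hf.intervalIntegrable_of_mem_Ici hb (hb.trans hbc)) fun u hu => hf hb (hb.trans hu.1) hu.1

theorem MonotoneOn.intervalIntegral_sub_intervalIntegral (hf : MonotoneOn f (Ici a)) {b c : ℝ}
    (hb : a ≤ b) (hc : a ≤ c) : (∫ s in a..c, f s) - ∫ s in a..b, f s = ∫ s in b..c, f s :=
  integral_interval_sub_left (hf.intervalIntegrable_of_mem_Ici le_rfl hc)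
    (hf.intervalIntegrable_of_mem_Ici le_rfl hb)

theorem MonotoneOn.monotoneOn_primitive (hf : MonotoneOn f (Ici a)) (hfa : 0 ≤ f a) :
    MonotoneOn (fun t => ∫ s in a..t, f s) (Ici a) := fun b hb c hc hbc => by
  have h := hf.mul_le_intervalIntegral hb hbc
  rw [← hf.intervalIntegral_sub_intervalIntegral hb hc] at h
  nlinarith [sub_nonneg.2 hbc, hfa.trans (hf self_mem_Ici hb hb)]

theorem MonotoneOn.convexOn_primitive (hf : MonotoneOn f (Ici a)) :
    ConvexOn ℝ (Ici a) fun t => ∫ s in a..t, f s := by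
  refine convexOn_of_slope_mono_adjacent (convex_Ici a) fun {x y z} hx hz hxy hyz => ?_
  have hy : a ≤ y := le_trans hx hxy.le
  rw [hf.intervalIntegral_sub_intervalIntegral hx hy,
    hf.intervalIntegral_sub_intervalIntegral hy hz, div_le_div_iff₀ (sub_pos.2 hxy) (sub_pos.2 hyz)]
  have hleft := hf.intervalIntegral_le_mul hx hxy.le
  have hright := hf.mul_le_intervalIntegral hy hyz.le
  nlinarith [sub_pos.2 hxy, sub_pos.2 hyz]

end MonotonePrimitive

theorem ConvexOn.apply_mul_le {f : ℝ → ℝ} (hf : ConvexOn ℝ (Ici 0) f) (h0 : f 0 = 0)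
    {θ y : ℝ} (hθ₀ : 0 ≤ θ) (hθ₁ : θ ≤ 1) (hy : 0 ≤ y) : f (θ * y) ≤ θ * f y := by
  simpa [h0] using hf.2 (mem_Ici.2 le_rfl) (mem_Ici.2 hy) (sub_nonneg.2 hθ₁) hθ₀ (by ring)

theorem lipschitzOnWith_inv_norm_smul {E : Type*} [NormedAddCommGroup E] [NormedSpace ℝ E] :
    LipschitzOnWith 2 (fun x : E => ‖x‖⁻¹ • x) {x | 1 ≤ ‖x‖} := by
  refine LipschitzOnWith.of_dist_le_mul fun x (hx : 1 ≤ ‖x‖) y (hy : 1 ≤ ‖y‖) => ?_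
  have hx₀ : 0 < ‖x‖ := one_pos.trans_le hx
  have hy₀ : 0 < ‖y‖ := one_pos.trans_le hy
  have hsplit : ‖x‖⁻¹ • x - ‖y‖⁻¹ • y = ‖x‖⁻¹ • (x - y) + (‖x‖⁻¹ - ‖y‖⁻¹) • y := by
    rw [smul_sub, sub_smul]; abel
  have h₁ : ‖‖x‖⁻¹ • (x - y)‖ ≤ ‖x - y‖ := by
    rw [norm_smul, norm_inv, norm_norm]
    exact mul_le_of_le_one_left (norm_nonneg _) (inv_le_one_of_one_le₀ hx)
  have h₂ : ‖(‖x‖⁻¹ - ‖y‖⁻¹) • y‖ ≤ ‖x - y‖ := by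
    have : ‖(‖x‖⁻¹ - ‖y‖⁻¹) • y‖ = |‖x‖ - ‖y‖| / ‖x‖ := by
      rw [norm_smul, Real.norm_eq_abs, inv_sub_inv hx₀.ne' hy₀.ne', abs_div,
        abs_of_pos (mul_pos hx₀ hy₀), abs_sub_comm]
      field_simp
    rw [this]
    exact div_le_of_le_mul₀ hx₀.le (norm_nonneg _)
      ((abs_norm_sub_norm_le x y).trans (le_mul_of_one_le_right (norm_nonneg _) hx))
  rw [dist_eq_norm, dist_eq_norm, hsplit, NNReal.coe_ofNat, two_mul]
  exact (norm_add_le _ _).trans (add_le_add h₁ h₂)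

namespace EuclideanSpace

variable {k : ℕ}

def insertCoord (i : Fin (k + 1)) (c : ℝ) (u : EuclideanSpace ℝ (Fin k)) :
    EuclideanSpace ℝ (Fin (k + 1)) :=
  WithLp.toLp 2 (Fin.insertNth i c u.ofLp)

def removeCoord (i : Fin (k + 1)) (w : EuclideanSpace ℝ (Fin (k + 1))) :
    EuclideanSpace ℝ (Fin k) :=
  WithLp.toLp 2 (Fin.removeNth i w.ofLp)

@[simp]
theorem insertCoord_apply_self (i : Fin (k + 1)) (c : ℝ) (u : EuclideanSpace ℝ (Fin k)) :
    insertCoord i c u i = c := by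
  simp [insertCoord]

@[simp]
theorem removeCoord_apply (i : Fin (k + 1)) (w : EuclideanSpace ℝ (Fin (k + 1))) (j : Fin k) :
    removeCoord i w j = w (i.succAbove j) := rfl

@[simp]
theorem removeCoord_insertCoord (i : Fin (k + 1)) (c : ℝ) (u : EuclideanSpace ℝ (Fin k)) :
    removeCoord i (insertCoord i c u) = u := by
  ext j; simp [insertCoord]

theorem insertCoord_self_removeCoord (i : Fin (k + 1)) (w : EuclideanSpace ℝ (Fin (k + 1))) :
    insertCoord i (w i) (removeCoord i w) = w := by
  ext j; simp [insertCoord, removeCoord]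

theorem norm_sq_insertCoord (i : Fin (k + 1)) (c : ℝ) (u : EuclideanSpace ℝ (Fin k)) :
    ‖insertCoord i c u‖ ^ 2 = c ^ 2 + ‖u‖ ^ 2 := by
  simp [EuclideanSpace.real_norm_sq_eq, Fin.sum_univ_succAbove _ i, insertCoord]

theorem insertCoord_sub_insertCoord (i : Fin (k + 1)) (c : ℝ) (u v : EuclideanSpace ℝ (Fin k)) :
    insertCoord i c u - insertCoord i c v = insertCoord i 0 (u - v) := by
  ext j
  induction j using i.succAboveCases <;> simp [insertCoord]

theorem isometry_insertCoord (i : Fin (k + 1)) (c : ℝ) : Isometry (insertCoord i c) := by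
  refine Isometry.of_dist_eq fun u v => ?_
  rw [dist_eq_norm, dist_eq_norm, insertCoord_sub_insertCoord, ← sq_eq_sq₀ (norm_nonneg _)
    (norm_nonneg _), norm_sq_insertCoord, zero_pow two_ne_zero, zero_add]

theorem norm_removeCoord_le (i : Fin (k + 1)) (w : EuclideanSpace ℝ (Fin (k + 1))) :
    ‖removeCoord i w‖ ≤ ‖w‖ := by
  have hnorm := norm_sq_insertCoord i (w i) (removeCoord i w)
  rw [insertCoord_self_removeCoord] at hnorm
  exact le_of_sq_le_sq (by nlinarith [sq_nonneg (w i)]) (norm_nonneg _)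

theorem lipschitzWith_removeCoord (i : Fin (k + 1)) : LipschitzWith 1 (removeCoord i) :=
  LipschitzWith.of_dist_le_mul fun w v => by
    have hsub : removeCoord i (w - v) = removeCoord i w - removeCoord i v := rfl
    simpa [dist_eq_norm, hsub] using norm_removeCoord_le i (w - v)

end EuclideanSpace

section Sphere

variable {k : ℕ}

theorem lipschitzOnWith_inv_norm_smul_insertCoord (i : Fin (k + 1)) {c : ℝ} (hc : 1 ≤ |c|)
    (s : Set (EuclideanSpace ℝ (Fin k))) :
    LipschitzOnWith 2 (fun u => ‖insertCoord i c u‖⁻¹ • insertCoord i c u) s := by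
  have hmaps : MapsTo (insertCoord i c) s {x | 1 ≤ ‖x‖} := fun u _ =>
    hc.trans (by simpa using PiLp.norm_apply_le (insertCoord i c u) i)
  have h := lipschitzOnWith_inv_norm_smul.comp
    (isometry_insertCoord i c).lipschitz.lipschitzOnWith hmaps
  rwa [mul_one] at h

theorem sphere_subset_iUnion_image_insertCoord :
    sphere (0 : EuclideanSpace ℝ (Fin (k + 1))) 1 ⊆
      ⋃ i, ⋃ c ∈ ({-1, 1} : Set ℝ), (fun u => ‖insertCoord i c u‖⁻¹ • insertCoord i c u) ''
        closedBall 0 (k + 1) := by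
  intro w hw
  rw [mem_sphere_zero_iff_norm] at hw
  obtain ⟨i, -, hi⟩ : ∃ i ∈ Finset.univ, 1 / (k + 1 : ℝ) ≤ w i ^ 2 := by
    refine Finset.exists_le_of_sum_le Finset.univ_nonempty (le_of_eq ?_)
    rw [← EuclideanSpace.real_norm_sq_eq, hw]
    simp [field]
  -- `w` is the radial projection of `|wᵢ|⁻¹ • w`, which lies on the face `{xᵢ = ±1}` of the cube
  have hwi_le : |w i| ≤ 1 := by simpa [hw] using PiLp.norm_apply_le w i
  have hwi : 0 < |w i| := abs_pos.2 fun h => by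
    rw [h] at hi; norm_num at hi; linarith
  set u : EuclideanSpace ℝ (Fin k) := |w i|⁻¹ • removeCoord i w
  have hins : insertCoord i (w i / |w i|) u = |w i|⁻¹ • w := by
    ext j
    induction j using i.succAboveCases <;> simp [u, insertCoord, div_eq_inv_mul]
  refine mem_iUnion.2 ⟨i, mem_iUnion₂.2 ⟨w i / |w i|, ?_, u, ?_, ?_⟩⟩
  · rcases lt_or_gt_of_ne (abs_pos.1 hwi) with h | h
    · simp [abs_of_neg h, h.ne]
    · simp [abs_of_pos h, h.ne']
  · have hremove : ‖removeCoord i w‖ ≤ 1 := hw ▸ norm_removeCoord_le i w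
    have hinv : |w i|⁻¹ ≤ k + 1 := by
      rw [inv_le_comm₀ hwi (by positivity), ← one_div]
      exact hi.trans (by rw [← sq_abs]; nlinarith)
    rw [mem_closedBall_zero_iff, norm_smul, norm_inv, Real.norm_eq_abs, abs_abs]
    exact (mul_le_of_le_one_right (by positivity) hremove).trans hinv
  · simp [hins, norm_smul, hw, smul_smul, hwi.ne']

theorem hausdorffMeasure_sphere_lt_top :
    μH[k] (sphere (0 : EuclideanSpace ℝ (Fin (k + 1))) 1) < ∞ := by
  refine (measure_mono sphere_subset_iUnion_image_insertCoord).trans_lt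
    ((measure_iUnion_fintype_le _ _).trans_lt (ENNReal.sum_lt_top.2 fun i _ =>
      measure_biUnion_lt_top (toFinite _) fun c hc => ?_))
  have hc : 1 ≤ |c| := by rcases hc with rfl | rfl <;> simp
  refine ((lipschitzOnWith_inv_norm_smul_insertCoord i hc _).hausdorffMeasure_image_le
    k.cast_nonneg).trans_lt (ENNReal.mul_lt_top ?_ (isCompact_closedBall _ _).measure_lt_top)
  exact ENNReal.rpow_lt_top_of_nonneg k.cast_nonneg ENNReal.coe_ne_top

theorem hausdorffMeasure_sphere_inter_abs_apply_ge_pos (i : Fin (k + 1)) :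
    0 < μH[k] {w ∈ sphere (0 : EuclideanSpace ℝ (Fin (k + 1))) 1 | 1 / 2 ≤ |w i|} := by
  set cap := {w ∈ sphere (0 : EuclideanSpace ℝ (Fin (k + 1))) 1 | 1 / 2 ≤ |w i|}
  have hball : closedBall 0 (1 / 2) ⊆ removeCoord i '' cap := by
    intro u hu
    rw [mem_closedBall_zero_iff] at hu
    have hu2 : ‖u‖ ^ 2 ≤ 1 / 4 := by nlinarith [norm_nonneg u]
    have hs : 1 / 2 ≤ √(1 - ‖u‖ ^ 2) := Real.le_sqrt_of_sq_le (by linarith)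
    refine ⟨insertCoord i √(1 - ‖u‖ ^ 2) u, ⟨?_, ?_⟩, removeCoord_insertCoord _ _ _⟩
    · rw [mem_sphere_zero_iff_norm, ← pow_eq_one_iff_of_nonneg (norm_nonneg _) two_ne_zero,
        norm_sq_insertCoord, Real.sq_sqrt (by linarith)]
      ring
    · simpa [abs_of_nonneg (Real.sqrt_nonneg _)] using hs
  have himage :=
    ((lipschitzWith_removeCoord i).lipschitzOnWith (s := cap)).hausdorffMeasure_image_le
      k.cast_nonneg
  rw [ENNReal.coe_one, ENNReal.one_rpow, one_mul] at himage
  exact ((measure_closedBall_pos _ _ (by norm_num)).trans_le (measure_mono hball)).trans_le himage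

end Sphere

namespace GenYoung

variable {m : ℕ} (D : GenYoung m) (x y : Euc m)

@[simp]
theorem G_zero : D.G x y 0 = 0 := integral_same

theorem monotoneOn_G : MonotoneOn (D.G x y) (Ici 0) :=
  (D.g_mono x y).monotoneOn_primitive (D.g_nonneg x y 0 le_rfl)

theorem G_nonneg {t : ℝ} (ht : 0 ≤ t) : 0 ≤ D.G x y t :=
  D.G_zero x y ▸ D.monotoneOn_G x y self_mem_Ici ht ht

theorem convexOn_G : ConvexOn ℝ (Ici 0) (D.G x y) :=
  (D.g_mono x y).convexOn_primitive

theorem continuousOn_G {ρ : ℝ} (hρ : 0 ≤ ρ) : ContinuousOn (D.G x y) (Icc 0 ρ) := by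
  have h := continuousOn_primitive_interval'
    ((D.g_mono x y).intervalIntegrable_of_mem_Ici le_rfl hρ) left_mem_uIcc
  rwa [uIcc_of_le hρ] at h

theorem tendsto_G_div_atTop : Tendsto (fun t => D.G x y t / t) atTop atTop := by
  have hlower : ∀ t : ℝ, 0 < t → D.g x y (t / 2) / 2 ≤ D.G x y t / t := fun t ht => by
    have hsplit := (D.g_mono x y).intervalIntegral_sub_intervalIntegral (b := t / 2) (c := t)
      (by positivity) ht.le
    have hhalf := (D.g_mono x y).mul_le_intervalIntegral (b := t / 2) (c := t)
      (by positivity) (by linarith)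
    have hG := D.G_nonneg x y (t := t / 2) (by positivity)
    rw [le_div_iff₀ ht]
    simp only [G] at hG ⊢
    linarith
  exact tendsto_atTop_mono' _ ((eventually_gt_atTop 0).mono hlower)
    (((D.g_top x y).comp (tendsto_id.atTop_div_const two_pos)).atTop_div_const two_pos)

end GenYoung

section SphericalDensity

variable {m : ℕ} (D : GenYoung m) (x : Euc m)

theorem continuous_lastCoord : Continuous (lastCoord (m := m)) := by
  unfold lastCoord; fun_prop

theorem integrableOn_sphere_G_abs_lastCoord_mul {ρ : ℝ} (hρ : 0 ≤ ρ) :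
    IntegrableOn (fun w => D.G x x (|lastCoord w| * ρ)) (sphere (0 : Euc m) 1) μH[(m : ℝ)] := by
  have hmaps : MapsTo (fun w : Euc m => |lastCoord w| * ρ) (sphere 0 1) (Icc 0 ρ) := fun w hw =>
    ⟨by positivity, mul_le_of_le_one_left hρ <| by
      simpa [lastCoord, mem_sphere_zero_iff_norm.1 hw] using PiLp.norm_apply_le w (Fin.last m)⟩
  have hcont := (D.continuousOn_G x x hρ).comp
    (continuous_lastCoord.abs.mul continuous_const).continuousOn hmaps
  exact hcont.integrableOn_of_subset_isCompact (isCompact_sphere 0 1)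
    isClosed_sphere.measurableSet Subset.rfl hausdorffMeasure_sphere_lt_top.ne

theorem sphDensity_nonneg {ρ : ℝ} (hρ : 0 ≤ ρ) : 0 ≤ sphDensity D x ρ := by
  unfold sphDensity
  split_ifs
  · exact le_rfl
  · exact div_nonneg (setIntegral_nonneg isClosed_sphere.measurableSet fun w _ =>
      D.G_nonneg x x (by positivity)) hρ

theorem monotoneOn_sphDensity : MonotoneOn (sphDensity D x) (Ici 0) := by
  intro a (ha : 0 ≤ a) b (hb : 0 ≤ b) hab
  rcases ha.eq_or_lt with rfl | ha
  · simpa [sphDensity] using sphDensity_nonneg D x hb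
  have hb : 0 < b := ha.trans_le hab
  simp only [sphDensity, if_neg ha.ne', if_neg hb.ne', ← MeasureTheory.integral_div]
  refine setIntegral_mono_on ((integrableOn_sphere_G_abs_lastCoord_mul D x ha.le).div_const a)
    ((integrableOn_sphere_G_abs_lastCoord_mul D x hb.le).div_const b)
    isClosed_sphere.measurableSet fun w _ => ?_
  have hw := abs_nonneg (lastCoord w)
  have hconv := (D.convexOn_G x x).apply_mul_le (D.G_zero x x) (div_nonneg ha.le hb.le)
    ((div_le_one hb).2 hab) (mul_nonneg hw hb.le)
  calc D.G x x (|lastCoord w| * a) / a = D.G x x (a / b * (|lastCoord w| * b)) / a := by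
        field_simp
    _ ≤ a / b * D.G x x (|lastCoord w| * b) / a := by gcongr
    _ = D.G x x (|lastCoord w| * b) / b := by field_simp

theorem measureReal_cap_mul_G_le_integral {ρ : ℝ} (hρ : 0 ≤ ρ) :
    (μH[(m : ℝ)]).real {w ∈ sphere (0 : Euc m) 1 | 1 / 2 ≤ |lastCoord w|} * D.G x x (ρ / 2) ≤
      ∫ w in sphere (0 : Euc m) 1, D.G x x (|lastCoord w| * ρ) ∂μH[(m : ℝ)] := by
  have hcap : MeasurableSet {w ∈ sphere (0 : Euc m) 1 | 1 / 2 ≤ |lastCoord w|} :=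
    isClosed_sphere.measurableSet.inter
      (measurableSet_le measurable_const continuous_lastCoord.abs.measurable)
  have hint := integrableOn_sphere_G_abs_lastCoord_mul D x hρ
  calc _ ≤ ∫ w in {w ∈ sphere (0 : Euc m) 1 | 1 / 2 ≤ |lastCoord w|},
          D.G x x (|lastCoord w| * ρ) ∂μH[(m : ℝ)] :=
        setIntegral_ge_of_const_le hcap
          ((measure_mono (sep_subset _ _)).trans_lt hausdorffMeasure_sphere_lt_top).ne
          (fun w hw => D.monotoneOn_G x x (by positivity : (0 : ℝ) ≤ ρ / 2)
            (mul_nonneg (abs_nonneg _) hρ) (by nlinarith [hw.2]))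
          (hint.mono_set (sep_subset _ _))
    _ ≤ _ := setIntegral_mono_set hint
        ((ae_restrict_iff' isClosed_sphere.measurableSet).2 (ae_of_all _ fun w _ =>
          D.G_nonneg x x (by positivity)))
        (sep_subset _ _).eventuallyLE

theorem tendsto_sphDensity_atTop : Tendsto (sphDensity D x) atTop atTop := by
  set c := (μH[(m : ℝ)]).real {w ∈ sphere (0 : Euc m) 1 | 1 / 2 ≤ |lastCoord w|}
  have hc : 0 < c := ENNReal.toReal_pos (hausdorffMeasure_sphere_inter_abs_apply_ge_pos _).ne'
    ((measure_mono (sep_subset _ _)).trans_lt hausdorffMeasure_sphere_lt_top).ne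
  refine tendsto_atTop_mono' _ ?_ (((D.tendsto_G_div_atTop x x).comp
    (tendsto_id.atTop_div_const two_pos)).const_mul_atTop (half_pos hc))
  filter_upwards [eventually_gt_atTop 0] with ρ hρ
  rw [sphDensity, if_neg hρ.ne']
  calc c / 2 * (D.G x x (ρ / 2) / (ρ / 2)) = c * D.G x x (ρ / 2) / ρ := by
        field_simp
    _ ≤ _ := by gcongr; exact measureReal_cap_mul_G_le_integral D x hρ.le

theorem GenYoung.H0_eq_integral_sphDensity {t : ℝ} (ht : 0 ≤ t) :
    D.H0 x t = ∫ ρ in (0 : ℝ)..t, sphDensity D x ρ := by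
  rcases ht.eq_or_lt with rfl | ht
  · simp [GenYoung.H0]
  have hscale : D.H0 x t = ∫ r in (0 : ℝ)..1, t * sphDensity D x (t * r) := by
    refine integral_congr fun r _ => ?_
    rcases eq_or_ne r 0 with rfl | hr
    · simp [sphDensity]
    simp only [sphDensity, if_neg (mul_ne_zero ht.ne' hr)]
    field_simp
    congr 1 with w
    ring_nf
  rw [hscale, intervalIntegral.integral_const_mul, integral_comp_mul_left _ ht.ne', mul_zero,
    mul_one, smul_eq_mul, mul_inv_cancel_left₀ ht.ne']

end SphericalDensity

theorem statement4_general {m : ℕ} (D : GenYoung m) (x : Euc m) :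
    MonotoneOn (sphDensity D x) (Set.Ici 0) ∧
    Tendsto (sphDensity D x) atTop atTop ∧
    (∀ t : ℝ, 0 ≤ t → D.H0 x t = ∫ ρ in (0:ℝ)..t, sphDensity D x ρ) ∧
    ConvexOn ℝ (Set.Ici 0) (D.H0 x) ∧ D.H0 x 0 = 0 := by
  have hH0 : ∀ t : ℝ, 0 ≤ t → D.H0 x t = ∫ ρ in (0:ℝ)..t, sphDensity D x ρ :=
    fun _ ht => D.H0_eq_integral_sphDensity x ht
  refine ⟨monotoneOn_sphDensity D x, tendsto_sphDensity_atTop D x, hH0, ?_, by simpa using hH0 0⟩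
  exact (monotoneOn_sphDensity D x).convexOn_primitive.congr fun t ht => (hH0 t ht).symm

/-- Proposition 3.2 (first part): `h₀(x,·)` is nondecreasing on `[0,∞)` and tends
to `∞`, `H₀(x,t) = ∫₀ᵗ h₀(x,ρ) dρ`, and hence `H₀(x,·)` is convex on `[0,∞)` and
vanishes at `0`. -/
theorem statement4 {m : ℕ} (D : GenYoung m) (C1 C2 pm pp : ℝ)
    (h1 : D.H1 C1 C2) (h3 : D.H3 pm pp) (x : Euc m) :
    MonotoneOn (sphDensity D x) (Set.Ici 0) ∧
    Tendsto (sphDensity D x) atTop atTop ∧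
    (∀ t : ℝ, 0 ≤ t → D.H0 x t = ∫ ρ in (0:ℝ)..t, sphDensity D x ρ) ∧
    ConvexOn ℝ (Set.Ici 0) (D.H0 x) ∧ D.H0 x 0 = 0 :=
  statement4_general D x
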